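/- arXiv:1909.06988 — 2 statements merged into one kernel-verified Lean document; each statement's English description precedes it below -/
import Mathlib

section
/- Suppose the graph G is bicycle-free at radius r. Then any two distinct cycles in G of length at most 2r are vertex-disjoint. -/
/-!
If a vertex `x` lay on both cycles, each cycle, having length at most `2r`, would lie in the
ball of radius `r` about `x`. The subgraph induced on that ball is connected, and a connected
graph carrying two cycles with different edge sets has more edges than vertices: deleting an
edge of one cycle that is not on the other, and then an edge of the other cycle, keeps the graph
connected. This contradicts bicycle-freeness at `x`.
-/

open scoped Classical

namespace NearRamanujan

variable {V : Type*} [Fintype V] [DecidableEq V]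

/-- The set of vertices within distance `r` of `v` in `G`. -/
noncomputable def ball (G : SimpleGraph V) (v : V) (r : ℕ) : Finset V :=
  Finset.univ.filter (fun u => ∃ p : G.Walk v u, p.length ≤ r)

/-- The number of edges of the subgraph of `G` induced on the vertex set `S`. -/
noncomputable def edgesWithin (G : SimpleGraph V) (S : Finset V) : ℕ :=
  (G.edgeFinset.filter (fun e => ∀ x ∈ e, x ∈ S)).card

/-- `G` is bicycle-free at radius `r`: the subgraph induced on each radius-`r` ball
(which is a connected graph) contains at most one cycle, equivalently it has at most
as many edges as vertices. -/
def BicycleFree (G : SimpleGraph V) (r : ℕ) : Prop :=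
  ∀ v : V, edgesWithin G (ball G v r) ≤ (ball G v r).card

/-- The value in `{±1}` of an edge-signing `σ : G.edgeSet → Bool` on `e` (`0` off the edges). -/
noncomputable def edgeSign (G : SimpleGraph V) (σ : G.edgeSet → Bool) (e : Sym2 V) : ℝ :=
  if h : e ∈ G.edgeSet then (if σ ⟨e, h⟩ then 1 else -1) else 0

/-- The signed adjacency matrix of the edge-signing `σ` of `G`. -/
noncomputable def signedAdj (G : SimpleGraph V) (σ : G.edgeSet → Bool) : Matrix V V ℝ :=
  fun u v => if G.Adj u v then edgeSign G σ s(u, v) else 0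

/-- The signed non-backtracking matrix of the edge-signing `σ` of `G`, indexed by
the darts (directed edges) of `G`. -/
noncomputable def nbMatrix (G : SimpleGraph V) (σ : G.edgeSet → Bool) :
    Matrix G.Dart G.Dart ℝ :=
  fun e f => if e.snd = f.fst ∧ f.snd ≠ e.fst then edgeSign G σ s(f.fst, f.snd) else 0

end NearRamanujan

namespace SimpleGraph

variable {W : Type*} {G : SimpleGraph W}

lemma card_edgeSet_deleteEdges_singleton_add_one [Finite W] {e : Sym2 W} (he : e ∈ G.edgeSet) :
    Nat.card (G.deleteEdges {e}).edgeSet + 1 = Nat.card G.edgeSet := by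
  rw [edgeSet_deleteEdges, Nat.card_coe_set_eq, Nat.card_coe_set_eq,
    Set.ncard_sdiff_singleton_add_one he]

lemma Connected.card_vert_le_card_edgeSet_of_isCycle [Finite W] (hG : G.Connected) {u : W}
    {c : G.Walk u u} (hc : c.IsCycle) : Nat.card W ≤ Nat.card G.edgeSet := by
  obtain ⟨e, he⟩ := List.exists_mem_of_ne_nil c.edges (by simpa using hc.not_nil)
  induction e with | h x y
  have hconn :=
    hG.connected_delete_edge_of_not_isBridge fun hb => hb.notMem_edges_of_isCycle hc he
  have := card_edgeSet_deleteEdges_singleton_add_one (c.edges_subset_edgeSet he)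
  have := hconn.card_vert_le_card_edgeSet_add_one
  omega

lemma Connected.card_vert_lt_card_edgeSet_of_isCycle [Finite W] (hG : G.Connected) {u v : W}
    {c₁ : G.Walk u u} {c₂ : G.Walk v v} (h₁ : c₁.IsCycle) (h₂ : c₂.IsCycle) {e : Sym2 W}
    (he₁ : e ∈ c₁.edges) (he₂ : e ∉ c₂.edges) : Nat.card W < Nat.card G.edgeSet := by
  induction e with | h x y
  have hconn :=
    hG.connected_delete_edge_of_not_isBridge fun hb => hb.notMem_edges_of_isCycle h₁ he₁
  have h₂' : (c₂.toDeleteEdge _ he₂).IsCycle := h₂.transfer _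
  have := hconn.card_vert_le_card_edgeSet_of_isCycle h₂'
  have := card_edgeSet_deleteEdges_singleton_add_one (c₁.edges_subset_edgeSet he₁)
  omega

lemma Connected.card_vert_lt_card_edgeSet_of_edges_toFinset_ne [Finite W] [DecidableEq W]
    (hG : G.Connected) {u v : W} {c₁ : G.Walk u u} {c₂ : G.Walk v v} (h₁ : c₁.IsCycle)
    (h₂ : c₂.IsCycle) (hne : c₁.edges.toFinset ≠ c₂.edges.toFinset) :
    Nat.card W < Nat.card G.edgeSet := by
  obtain ⟨e, he⟩ : ∃ e, ¬(e ∈ c₁.edges ↔ e ∈ c₂.edges) := by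
    by_contra! h
    exact hne (by ext e; simp [h e])
  by_cases he₁ : e ∈ c₁.edges
  · exact hG.card_vert_lt_card_edgeSet_of_isCycle h₁ h₂ he₁ (by tauto)
  · exact hG.card_vert_lt_card_edgeSet_of_isCycle h₂ h₁ (by tauto) he₁

namespace Walk

lemma exists_two_mul_length_le_of_mem_support {x y : W} (c : G.Walk x x) (hy : y ∈ c.support) :
    ∃ p : G.Walk x y, 2 * p.length ≤ c.length := by
  have hlen : (c.takeUntil y hy).length + (c.dropUntil y hy).length = c.length := by
    rw [← length_append, take_spec]
  by_cases htake : 2 * (c.takeUntil y hy).length ≤ c.length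
  · exact ⟨_, htake⟩
  · exact ⟨(c.dropUntil y hy).reverse, by rw [length_reverse]; omega⟩

variable {s : Set W} {u : W} {c : G.Walk u u}

lemma IsCycle.induce (hc : c.IsCycle) (hs : ∀ x ∈ c.support, x ∈ s) :
    (c.induce s hs).IsCycle := by
  rw [← c.map_induce hs] at hc
  exact (isCycle_map_iff_of_injective (Embedding.induce (G := G) s).injective).1 hc

lemma map_edges_induce {v : W} (p : G.Walk u v) (hs : ∀ x ∈ p.support, x ∈ s) :
    (p.induce s hs).edges.map (Sym2.map (↑)) = p.edges := by
  induction p with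
  | nil => rfl
  | cons h p ih => simp [ih]

lemma edges_toFinset_induce_ne [DecidableEq W] {v u' v' : W} {p : G.Walk u v} {q : G.Walk u' v'}
    (hp : ∀ x ∈ p.support, x ∈ s) (hq : ∀ x ∈ q.support, x ∈ s)
    (hne : p.edges.toFinset ≠ q.edges.toFinset) :
    (p.induce s hp).edges.toFinset ≠ (q.induce s hq).edges.toFinset := by
  contrapose! hne
  have hmem (e) : e ∈ (p.induce s hp).edges ↔ e ∈ (q.induce s hq).edges := by
    rw [← List.mem_toFinset, hne, List.mem_toFinset]
  rw [← p.map_edges_induce hp, ← q.map_edges_induce hq]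
  ext e
  simp [hmem]

end Walk

end SimpleGraph

namespace NearRamanujan

open SimpleGraph

variable {V : Type*} [Fintype V]

lemma mem_ball {G : SimpleGraph V} {x y : V} {r : ℕ} :
    y ∈ ball G x r ↔ ∃ p : G.Walk x y, p.length ≤ r := by
  simp [ball]

lemma support_subset_ball {G : SimpleGraph V} {x y : V} {r : ℕ} (p : G.Walk x y)
    (hp : p.length ≤ r) : ∀ z ∈ p.support, z ∈ ball G x r :=
  fun z hz => mem_ball.2 ⟨p.takeUntil z hz, (p.length_takeUntil_le_length hz).trans hp⟩

lemma support_subset_ball_of_length_le_two_mul {G : SimpleGraph V} {u x : V} {r : ℕ}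
    {c : G.Walk u u} (hx : x ∈ c.support) (hc : c.length ≤ 2 * r) :
    ∀ y ∈ c.support, y ∈ ball G x r := by
  intro y hy
  obtain ⟨p, hp⟩ := (c.rotate x hx).exists_two_mul_length_le_of_mem_support
    ((c.mem_support_rotate_iff x hx).2 hy)
  exact mem_ball.2 ⟨p, by rw [Walk.length_rotate] at hp; omega⟩

lemma connected_induce_ball (G : SimpleGraph V) (x : V) (r : ℕ) :
    (G.induce (ball G x r : Set V)).Connected :=
  induce_connected_of_patches x (mem_ball.2 ⟨.nil, Nat.zero_le r⟩) fun hy => by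
    obtain ⟨p, hp⟩ := mem_ball.1 hy
    exact ⟨_, support_subset_ball p hp, p.start_mem_support, p.end_mem_support,
      p.connected_induce_support.preconnected _ _⟩

lemma edgesWithin_eq_card_edgeSet_induce [DecidableEq V] (G : SimpleGraph V) (S : Finset V) :
    edgesWithin G S = Nat.card (G.induce (S : Set V)).edgeSet := by
  rw [Nat.card_eq_fintype_card, ← edgeFinset_card, ← card_filter_edgeFinset_toFinset_subset,
    edgesWithin]
  congr 1
  ext e
  simp [Finset.subset_iff]

/-- Fact 2.15.  If `G` is bicycle-free at radius `r`, then any two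
distinct cycles in `G` of length at most `2r` are vertex-disjoint.  Two cycles are
distinct when their edge sets differ (a cycle is determined, up to rotation and
reflection, by its edge set). -/
theorem cycles_vertexDisjoint_of_bicycleFree {V : Type*} [Fintype V] [DecidableEq V]
    (G : SimpleGraph V) (r : ℕ) (h : BicycleFree G r)
    (u v : V) (c₁ : G.Walk u u) (c₂ : G.Walk v v)
    (h₁ : c₁.IsCycle) (h₂ : c₂.IsCycle)
    (hl₁ : c₁.length ≤ 2 * r) (hl₂ : c₂.length ≤ 2 * r)
    (hne : c₁.edges.toFinset ≠ c₂.edges.toFinset) :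
    ∀ x : V, x ∈ c₁.support → x ∉ c₂.support := by
  intro x hx₁ hx₂
  have hS₁ := support_subset_ball_of_length_le_two_mul hx₁ hl₁
  have hS₂ := support_subset_ball_of_length_le_two_mul hx₂ hl₂
  have hlt := (connected_induce_ball G x r).card_vert_lt_card_edgeSet_of_edges_toFinset_ne
    (h₁.induce hS₁) (h₂.induce hS₂) (Walk.edges_toFinset_induce_ne hS₁ hS₂ hne)
  rw [← edgesWithin_eq_card_edgeSet_induce, Nat.card_coe_set_eq, Set.ncard_coe_finset] at hlt
  exact (h x).not_gt hlt

end NearRamanujan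
end

section
/- Let H be a graph with v ≥ 3 vertices whose girth g satisfies g ≥ 20·ln v. Then the excess of H satisfies exc(H) ≤ ((2·ln v)/g)·v. -/
/-!
Deleting vertices of degree at most one never decreases `∑ (d_v - 2) = 2 exc`, so we may pass to
an induced subgraph `G[S]` of minimum degree two. Fix `t` with `2 (t + 1) < g`. Two distinct
non-backtracking walks of length `t + 1` with the same ends would close a cycle of length at most
`2 (t + 1)`, so `G[S]` has at most `|S| n` such walks. Conversely (Alon–Hoory–Linial), those
ending in an arc `e` number at least `exp` of the entropy of the uniformly random non-backtracking
walk run backwards from `e`; these entropies average to `t ∑ d_v log (d_v - 1) / ∑ d_v` over the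
arcs, and Jensen's inequality compares the average of `exp` with `exp` of the average. Hence
`t ∑ d_v log (d_v - 1) ≤ (∑ d_v) log n`, and `d log (d - 1) ≥ 2 (d - 2)` bounds `∑ (d_v - 2)`.
-/

open scoped Classical
open Finset

lemma Finset.exists_two_le_or_exists_ne_of_two_le_sum {ι : Type*} {s : Finset ι}
    {f : ι → ℕ} (h : 2 ≤ ∑ i ∈ s, f i) :
    (∃ i ∈ s, 2 ≤ f i) ∨ ∃ i ∈ s, ∃ j ∈ s, i ≠ j ∧ 0 < f i ∧ 0 < f j := by
  obtain ⟨i, hi, hfi⟩ := sum_pos_iff.mp (by omega : 0 < ∑ i ∈ s, f i)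
  by_cases h2 : 2 ≤ f i
  · exact .inl ⟨i, hi, h2⟩
  · rw [← add_sum_erase s f hi] at h
    obtain ⟨j, hj, hfj⟩ := sum_pos_iff.mp (by omega : 0 < ∑ j ∈ s.erase i, f j)
    exact .inr ⟨i, hi, j, mem_of_mem_erase hj, (ne_of_mem_erase hj).symm, hfi, hfj⟩

lemma Real.exp_sum_div_card_le {ι : Type*} {s : Finset ι} (hs : s.Nonempty)
    (f : ι → ℝ) : Real.exp ((∑ i ∈ s, f i) / #s) ≤ (∑ i ∈ s, Real.exp (f i)) / #s := by
  have hs' : (#s : ℝ) ≠ 0 := by exact_mod_cast hs.card_pos.ne'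
  simpa [← mul_sum, div_eq_inv_mul] using convexOn_exp.map_sum_le (t := s)
    (w := fun _ => (#s : ℝ)⁻¹) (p := f) (fun _ _ => by positivity) (by simp [hs'])
    (fun _ _ => Set.mem_univ _)

lemma Real.two_mul_sub_one_div_add_one_le_log {x : ℝ} (hx : 1 ≤ x) :
    2 * (x - 1) / (x + 1) ≤ Real.log x := by
  set y := (x - 1) / (x + 1)
  have hy : 0 ≤ y := div_nonneg (by linarith) (by linarith)
  have hy1 : |y| < 1 := by rw [abs_of_nonneg hy, div_lt_one (by linarith)]; linarith
  have hlog : Real.log (1 + y) - Real.log (1 - y) = Real.log x := by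
    rw [← Real.log_div (by positivity) (by linarith [(abs_lt.mp hy1).2])]
    congr 1
    simp only [y]
    field_simp
    ring
  -- the series `log (1 + y) - log (1 - y) = 2 * ∑ y ^ (2k+1) / (2k+1)` has nonnegative terms
  have := le_hasSum (Real.hasSum_log_sub_log_of_abs_lt_one hy1) 0 fun k _ => by positivity
  simpa [hlog, y, mul_div_assoc] using this

lemma two_mul_sub_two_le_mul_log {d : ℕ} (hd : 2 ≤ d) :
    2 * ((d : ℝ) - 2) ≤ d * Real.log (d - 1 : ℕ) := by
  have hx : (1 : ℝ) ≤ (d - 1 : ℕ) := by exact_mod_cast (by omega : 1 ≤ d - 1)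
  have h := Real.two_mul_sub_one_div_add_one_le_log hx
  push_cast [Nat.cast_sub (by omega : 1 ≤ d)] at h ⊢
  rw [sub_add_cancel, div_le_iff₀ (by positivity)] at h
  linarith

namespace SimpleGraph.Walk

variable {V : Type*} {G : SimpleGraph V}

def IsNonBacktracking {u v : V} (p : G.Walk u v) : Prop :=
  p.darts.IsChain fun d₁ d₂ => d₂.snd ≠ d₁.fst

@[simp]
lemma isNonBacktracking_nil {u : V} : (nil : G.Walk u u).IsNonBacktracking :=
  List.isChain_nil

lemma isNonBacktracking_cons_iff {u v w : V} (h : G.Adj u v) (p : G.Walk v w) :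
    (cons h p).IsNonBacktracking ↔ p.snd ≠ u ∧ p.IsNonBacktracking := by
  cases p with
  | nil => simpa [IsNonBacktracking] using h.ne'
  | cons h' p => simp [IsNonBacktracking, List.isChain_cons_cons]

lemma IsNonBacktracking.of_cons {u v w : V} {h : G.Adj u v} {p : G.Walk v w}
    (hp : (cons h p).IsNonBacktracking) : p.IsNonBacktracking :=
  ((isNonBacktracking_cons_iff h p).mp hp).2

@[simp]
lemma isNonBacktracking_reverse {u v : V} {p : G.Walk u v} :
    p.reverse.IsNonBacktracking ↔ p.IsNonBacktracking := by
  simp only [IsNonBacktracking, darts_reverse, List.isChain_reverse, List.isChain_map]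
  exact List.IsChain.iff fun _ _ => by simp [Dart.symm, eq_comm]

lemma isNonBacktracking_concat_iff {u v w : V} (p : G.Walk u v) (h : G.Adj v w) :
    (p.concat h).IsNonBacktracking ↔ p.penultimate ≠ w ∧ p.IsNonBacktracking := by
  rw [← isNonBacktracking_reverse, reverse_concat, isNonBacktracking_cons_iff, snd_reverse,
    isNonBacktracking_reverse]

lemma IsNonBacktracking.append {u v w : V} {p : G.Walk u v} {q : G.Walk v w}
    (hp : p.IsNonBacktracking) (hq : q.IsNonBacktracking) (hpq : q.snd ≠ p.penultimate) :
    (p.append q).IsNonBacktracking := by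
  induction q with
  | nil => simpa
  | cons h q ih =>
    rw [isNonBacktracking_cons_iff] at hq
    rw [← concat_append]
    exact ih ((isNonBacktracking_concat_iff p h).mpr ⟨by simpa [eq_comm] using hpq, hp⟩) hq.2
      (by simpa using hq.1)

lemma IsNonBacktracking.exists_isCycle_of_not_nodup {u v : V} {p : G.Walk u v}
    (hp : p.IsNonBacktracking) (hdup : ¬p.support.Nodup) :
    ∃ (z : V) (c : G.Walk z z), c.IsCycle ∧ c.length ≤ p.length := by
  induction p with
  | nil => simp at hdup
  | @cons u v w h q ih =>
    by_cases hq : q.support.Nodup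
    · have hu : u ∈ q.support := by simpa [hq] using hdup
      refine ⟨u, cons h (q.takeUntil u hu),
        (cons_isCycle_iff _ h).mpr ⟨(IsPath.mk' hq).takeUntil hu, fun he => ?_⟩,
        by simpa using q.length_takeUntil_le_length hu⟩
      have hsnd := ((IsPath.mk' hq).takeUntil hu).eq_snd_of_mem_edges (Sym2.eq_swap ▸ he)
      rw [snd_takeUntil h.ne] at hsnd
      exact ((isNonBacktracking_cons_iff h q).mp hp).1 hsnd.symm
    · obtain ⟨z, c, hc, hlen⟩ := ih hp.of_cons hq
      exact ⟨z, c, hc, by simp; omega⟩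

lemma IsNonBacktracking.exists_isCycle_of_ne {x y : V} {p q : G.Walk x y}
    (hp : p.IsNonBacktracking) (hq : q.IsNonBacktracking) (hlen : p.length = q.length)
    (hne : p ≠ q) : ∃ (z : V) (c : G.Walk z z), c.IsCycle ∧ c.length ≤ p.length + q.length := by
  induction hn : p.length generalizing x y p q with
  | zero =>
    cases p <;> cases q <;> simp_all
  | succ n ih =>
    rw [← hlen, hn]
    have strip : ∀ {x y : V} {p q : G.Walk x y}, p.IsNonBacktracking → q.IsNonBacktracking →
        p.length = n + 1 → q.length = n + 1 → p ≠ q → p.snd = q.snd →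
        ∃ (z : V) (c : G.Walk z z), c.IsCycle ∧ c.length ≤ n + 1 + (n + 1) := by
      rintro x y (_ | ⟨hp', p'⟩) (_ | ⟨hq', q'⟩) hp hq hpl hql hne hs <;> simp at hpl hql hs
      subst hs
      obtain ⟨z, c, hc, hcl⟩ := ih hp.of_cons hq.of_cons (by omega) (by simpa using hne) hpl
      exact ⟨z, c, hc, by omega⟩
    by_cases hs : p.snd = q.snd
    · exact strip hp hq hn (hlen ▸ hn) hne hs
    by_cases hpen : p.penultimate = q.penultimate
    · exact strip (isNonBacktracking_reverse.mpr hp) (isNonBacktracking_reverse.mpr hq)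
        (by simpa using hn) (by simpa [← hlen] using hn)
        (fun h => hne (by simpa using congrArg reverse h)) (by simpa using hpen)
    -- With distinct first and last steps, `p` followed by `q` backwards never backtracks.
    have hnb : (p.append q.reverse).IsNonBacktracking :=
      hp.append (isNonBacktracking_reverse.mpr hq) (by simpa [eq_comm] using hpen)
    have hdup : ¬(p.append q.reverse).support.Nodup := by
      have hnil : ¬(p.append q.reverse).Nil := by rw [← length_eq_zero_iff]; simp [hn]
      rw [← cons_tail_support, List.nodup_cons, not_and_or, not_not]
      exact Or.inl (end_mem_tail_support hnil)
    obtain ⟨z, c, hc, hcl⟩ := hnb.exists_isCycle_of_not_nodup hdup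
    exact ⟨z, c, hc, by simp [← hlen, hn] at hcl; omega⟩

end SimpleGraph.Walk

namespace SimpleGraph

variable {V : Type*} (G : SimpleGraph V) (S : Finset V)

-- The induced subgraph `G[S]` is handled through its arcs (ordered adjacent pairs) and degrees.
noncomputable def arcsIn : Finset (V × V) := {e ∈ S ×ˢ S | G.Adj e.1 e.2}

noncomputable def degreeIn (v : V) : ℕ := #{u ∈ S | G.Adj v u}

noncomputable def nbPred (e : V × V) : Finset (V × V) :=
  {f ∈ G.arcsIn S | f.2 = e.1 ∧ f.1 ≠ e.2}

variable {G S}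

lemma mem_arcsIn {e : V × V} : e ∈ G.arcsIn S ↔ e.1 ∈ S ∧ e.2 ∈ S ∧ G.Adj e.1 e.2 := by
  simp [arcsIn, and_assoc]

lemma swap_mem_arcsIn {e : V × V} : e.swap ∈ G.arcsIn S ↔ e ∈ G.arcsIn S := by
  simp only [mem_arcsIn, Prod.fst_swap, Prod.snd_swap, G.adj_comm e.2]
  tauto

lemma card_filter_arcsIn_fst {v : V} (hv : v ∈ S) :
    #{e ∈ G.arcsIn S | e.1 = v} = G.degreeIn S v := by
  have : {e ∈ G.arcsIn S | e.1 = v} = {u ∈ S | G.Adj v u}.image (Prod.mk v) := by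
    ext ⟨a, b⟩
    simp only [mem_filter, mem_arcsIn, mem_image, Prod.mk.injEq]
    constructor
    · rintro ⟨⟨-, hb, hab⟩, rfl⟩
      exact ⟨b, ⟨hb, hab⟩, rfl, rfl⟩
    · rintro ⟨u, ⟨hu, hvu⟩, rfl, rfl⟩
      exact ⟨⟨hv, hu, hvu⟩, rfl⟩
  rw [this, card_image_of_injective _ (Prod.mk_right_injective v), degreeIn]

lemma sum_arcsIn_fst {M : Type*} [AddCommMonoid M] (φ : V → M) :
    ∑ e ∈ G.arcsIn S, φ e.1 = ∑ v ∈ S, G.degreeIn S v • φ v := by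
  rw [← sum_fiberwise_of_maps_to (g := Prod.fst) fun e he => (mem_arcsIn.mp he).1]
  refine sum_congr rfl fun v hv => ?_
  rw [sum_congr rfl fun e he => by rw [(mem_filter.mp he).2], sum_const,
    card_filter_arcsIn_fst hv]

lemma card_arcsIn : #(G.arcsIn S) = ∑ v ∈ S, G.degreeIn S v := by
  simpa using sum_arcsIn_fst (G := G) (S := S) fun _ => (1 : ℕ)

lemma nbPred_subset (e : V × V) : G.nbPred S e ⊆ G.arcsIn S := filter_subset _ _

-- The non-backtracking predecessors of `e` are the reverses of the arcs leaving `e.1`, except `e`.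
lemma card_nbPred {e : V × V} (he : e ∈ G.arcsIn S) :
    #(G.nbPred S e) = G.degreeIn S e.1 - 1 := by
  obtain ⟨p, q⟩ := e
  have : G.nbPred S (p, q) = ({f ∈ G.arcsIn S | f.1 = p}.erase (p, q)).image Prod.swap := by
    ext ⟨a, b⟩
    simp only [nbPred, mem_filter, mem_image, mem_erase, Prod.exists, Prod.swap_prod_mk,
      Prod.mk.injEq]
    constructor
    · rintro ⟨hab, rfl, haq⟩
      exact ⟨b, a, ⟨by simpa using haq, swap_mem_arcsIn.mp hab, rfl⟩, rfl, rfl⟩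
    · rintro ⟨c, d, ⟨hne, hcd, rfl⟩, rfl, rfl⟩
      exact ⟨swap_mem_arcsIn.mpr hcd, rfl, fun h => hne (by simp [h])⟩
  rw [this, card_image_of_injective _ Prod.swap_injective, card_erase_of_mem (by simp [he]),
    card_filter_arcsIn_fst (mem_arcsIn.mp he).1]

lemma card_filter_mem_nbPred {f : V × V} (hf : f ∈ G.arcsIn S) :
    #{e ∈ G.arcsIn S | f ∈ G.nbPred S e} = G.degreeIn S f.2 - 1 := by
  have : {e ∈ G.arcsIn S | f ∈ G.nbPred S e} = (G.nbPred S f.swap).image Prod.swap := by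
    ext ⟨a, b⟩
    simp only [nbPred, mem_filter, mem_image, Prod.exists, Prod.swap_prod_mk, Prod.mk.injEq,
      Prod.fst_swap, Prod.snd_swap]
    constructor
    · rintro ⟨hab, -, h₁, h₂⟩
      exact ⟨b, a, ⟨swap_mem_arcsIn.mpr hab, h₁.symm, Ne.symm h₂⟩, rfl, rfl⟩
    · rintro ⟨c, d, ⟨hcd, h₁, h₂⟩, rfl, rfl⟩
      exact ⟨swap_mem_arcsIn.mp hcd, hf, h₁.symm, Ne.symm h₂⟩
  rw [this, card_image_of_injective _ Prod.swap_injective,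
    card_nbPred (swap_mem_arcsIn.mpr hf), Prod.fst_swap]

lemma sum_sum_nbPred {M : Type*} [AddCommMonoid M] (h : V × V → M) :
    ∑ e ∈ G.arcsIn S, ∑ f ∈ G.nbPred S e, h f =
      ∑ f ∈ G.arcsIn S, (G.degreeIn S f.2 - 1) • h f := by
  rw [sum_comm' (t' := G.arcsIn S) (s' := fun f => {e ∈ G.arcsIn S | f ∈ G.nbPred S e})]
  · exact sum_congr rfl fun f hf => by rw [sum_const, card_filter_mem_nbPred hf]
  · intro e f
    simp only [mem_filter]
    constructor
    · rintro ⟨he, hf⟩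
      exact ⟨⟨he, hf⟩, nbPred_subset e hf⟩
    · rintro ⟨⟨he, hf⟩, -⟩
      exact ⟨he, hf⟩

lemma degreeIn_erase {v : V} (hv : v ∈ S) (u : V) :
    (G.degreeIn (S.erase v) u : ℤ) = G.degreeIn S u - if G.Adj u v then 1 else 0 := by
  rw [degreeIn, degreeIn, filter_erase]
  split_ifs with h
  · have hmem : v ∈ {w ∈ S | G.Adj u w} := mem_filter.mpr ⟨hv, h⟩
    rw [card_erase_of_mem hmem, Nat.cast_pred (card_pos.mpr ⟨v, hmem⟩)]
  · rw [erase_eq_of_notMem (by simp [h]), sub_zero]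

lemma sum_degreeIn_erase {v : V} (hv : v ∈ S) :
    ∑ u ∈ S.erase v, (G.degreeIn (S.erase v) u : ℤ) =
      ∑ u ∈ S, (G.degreeIn S u : ℤ) - 2 * G.degreeIn S v := by
  have hadj : ∑ u ∈ S.erase v, (if G.Adj u v then 1 else 0 : ℤ) = G.degreeIn S v := by
    rw [sum_boole, filter_erase, erase_eq_of_notMem (by simp), degreeIn]
    simp [G.adj_comm]
  rw [sum_congr rfl fun u _ => degreeIn_erase hv u, sum_sub_distrib, hadj,
    sum_erase_eq_sub hv]
  ring

-- The 2-core: deleting a vertex of degree at most one never decreases `∑ (degreeIn - 2)`.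
lemma exists_two_le_degreeIn_sum_sub_le (S : Finset V) :
    ∃ T : Finset V, (∀ v ∈ T, 2 ≤ G.degreeIn T v) ∧
      ∑ v ∈ S, ((G.degreeIn S v : ℤ) - 2) ≤ ∑ v ∈ T, ((G.degreeIn T v : ℤ) - 2) := by
  induction S using Finset.strongInduction with | H S ih => ?_
  by_cases hS : ∀ v ∈ S, 2 ≤ G.degreeIn S v
  · exact ⟨S, hS, le_rfl⟩
  obtain ⟨v, hv, hdeg⟩ : ∃ v ∈ S, G.degreeIn S v < 2 := by simpa using hS
  obtain ⟨T, hT, hle⟩ := ih (S.erase v) (erase_ssubset hv)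
  refine ⟨T, hT, le_trans ?_ hle⟩
  simp only [sum_sub_distrib, sum_const, nsmul_eq_mul]
  rw [sum_degreeIn_erase hv, card_erase_of_mem hv, Nat.cast_pred (card_pos.mpr ⟨v, hv⟩)]
  omega

lemma sum_degreeIn_univ_sub_two [Fintype V] [Fintype G.edgeSet] :
    ∑ v, ((G.degreeIn univ v : ℤ) - 2) = 2 * (#G.edgeFinset - Fintype.card V) := by
  have : ∑ v, G.degreeIn univ v = 2 * #G.edgeFinset := by
    convert G.sum_degrees_eq_twice_card_edges using 2 with v
    · rw [← card_neighborFinset_eq_degree, neighborFinset_eq_filter, degreeIn]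
    · congr 1; ext; simp
  rw [sum_sub_distrib, ← Nat.cast_sum, this, sum_const, card_univ]
  push_cast
  ring

variable (G S) in
/-- The number of non-backtracking walks of length `t + 1` in `G[S]` from `x` with last arc `e`. -/
noncomputable def nbWalkCount (x : V) : ℕ → V × V → ℕ
  | 0, e => if e.1 = x then 1 else 0
  | t + 1, e => ∑ f ∈ G.nbPred S e, nbWalkCount x t f

lemma exists_walk_of_nbWalkCount_pos {x : V} {t : ℕ} {e : V × V} (he : e ∈ G.arcsIn S)
    (hpos : 0 < G.nbWalkCount S x t e) :
    ∃ p : G.Walk x e.2, p.length = t + 1 ∧ p.IsNonBacktracking ∧ p.penultimate = e.1 := by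
  induction t generalizing e with
  | zero =>
    obtain ⟨a, b⟩ := e
    obtain rfl : a = x := by by_contra h; simp [nbWalkCount, h] at hpos
    have hab := (mem_arcsIn.mp he).2.2
    exact ⟨.cons hab .nil, rfl, by simpa [Walk.isNonBacktracking_cons_iff] using hab.ne', rfl⟩
  | succ t ih =>
    obtain ⟨f, hf, hfpos⟩ := sum_pos_iff.mp hpos
    obtain ⟨p, hlen, hnb, hpen⟩ := ih (nbPred_subset e hf) hfpos
    obtain ⟨-, hfe, hfe'⟩ := mem_filter.mp hf
    have hadj : G.Adj f.2 e.2 := hfe ▸ (mem_arcsIn.mp he).2.2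
    exact ⟨p.concat hadj, by simp [hlen],
      (Walk.isNonBacktracking_concat_iff p hadj).mpr ⟨hpen ▸ hfe', hnb⟩, by simp [hfe]⟩

lemma exists_ne_walks_of_two_le_sum_nbWalkCount {x y : V} {t : ℕ} {F : Finset (V × V)}
    (hF : F ⊆ G.arcsIn S) (hFy : ∀ e ∈ F, e.2 = y)
    (h2 : 2 ≤ ∑ e ∈ F, G.nbWalkCount S x t e) :
    ∃ p q : G.Walk x y, p ≠ q ∧ p.length = t + 1 ∧ q.length = t + 1 ∧
      p.IsNonBacktracking ∧ q.IsNonBacktracking ∧ (p.penultimate, y) ∈ F ∧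
      (q.penultimate, y) ∈ F := by
  induction t using Nat.strong_induction_on generalizing y F with | _ t ih => ?_
  rcases exists_two_le_or_exists_ne_of_two_le_sum h2 with
    ⟨⟨a, b⟩, he, h2e⟩ | ⟨⟨a₁, b₁⟩, he₁, ⟨a₂, b₂⟩, he₂, hne, h₁, h₂⟩
  · obtain rfl : b = y := hFy _ he
    obtain _ | t := t
    · simp only [nbWalkCount] at h2e
      split at h2e <;> omega
    obtain ⟨p, q, hne, hp, hq, hpnb, hqnb, hpF, hqF⟩ := ih t (by omega) (nbPred_subset _)
      (fun f hf => (mem_filter.mp hf).2.1) h2e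
    have hab : G.Adj a b := (mem_arcsIn.mp (hF he)).2.2
    refine ⟨p.concat hab, q.concat hab, fun h => hne ?_, by simp [hp], by simp [hq],
      (Walk.isNonBacktracking_concat_iff p hab).mpr ⟨(mem_filter.mp hpF).2.2, hpnb⟩,
      (Walk.isNonBacktracking_concat_iff q hab).mpr ⟨(mem_filter.mp hqF).2.2, hqnb⟩,
      by simpa using he, by simpa using he⟩
    obtain ⟨_, h⟩ := Walk.concat_inj h
    simpa using h
  · obtain rfl : b₁ = y := hFy _ he₁
    obtain rfl : b₂ = b₁ := hFy _ he₂
    obtain ⟨p, hp, hpnb, hpa⟩ := exists_walk_of_nbWalkCount_pos (hF he₁) h₁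
    obtain ⟨q, hq, hqnb, hqa⟩ := exists_walk_of_nbWalkCount_pos (hF he₂) h₂
    refine ⟨p, q, fun h => hne ?_, hp, hq, hpnb, hqnb, by simpa [hpa], by simpa [hqa]⟩
    simp_all

lemma sum_nbWalkCount_snd_eq_le_one {t : ℕ} (hg : ((2 * (t + 1) : ℕ) : ℕ∞) < G.egirth)
    (x y : V) : ∑ e ∈ G.arcsIn S with e.2 = y, G.nbWalkCount S x t e ≤ 1 := by
  by_contra! h
  obtain ⟨p, q, hne, hp, hq, hpnb, hqnb, -⟩ := exists_ne_walks_of_two_le_sum_nbWalkCount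
    (filter_subset _ _) (fun e he => (mem_filter.mp he).2) h
  obtain ⟨z, c, hc, hcl⟩ := hpnb.exists_isCycle_of_ne hqnb (hp.trans hq.symm) hne
  have : G.egirth ≤ ((2 * (t + 1) : ℕ) : ℕ∞) :=
    (G.egirth_le_length hc).trans (by exact_mod_cast hcl.trans (by omega))
  exact hg.not_ge this

lemma sum_nbWalkCount_le_card [Fintype V] {t : ℕ}
    (hg : ((2 * (t + 1) : ℕ) : ℕ∞) < G.egirth) (x : V) :
    ∑ e ∈ G.arcsIn S, G.nbWalkCount S x t e ≤ Fintype.card V := by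
  rw [← sum_fiberwise_of_maps_to (g := Prod.snd) (t := univ) fun _ _ => mem_univ _]
  simpa using sum_le_sum fun y (_ : y ∈ univ) => sum_nbWalkCount_snd_eq_le_one (S := S) hg x y

variable (G S) in
/-- `nbEntropy t e` is the entropy of the uniformly random non-backtracking walk that starts
backwards from the arc `e` and takes `t` steps, choosing each predecessor uniformly. -/
noncomputable def nbEntropy : ℕ → V × V → ℝ
  | 0, _ => 0
  | t + 1, e =>
    Real.log #(G.nbPred S e) + (∑ f ∈ G.nbPred S e, nbEntropy t f) / #(G.nbPred S e)

lemma nonempty_nbPred (hS : ∀ v ∈ S, 2 ≤ G.degreeIn S v) {e : V × V} (he : e ∈ G.arcsIn S) :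
    (G.nbPred S e).Nonempty := by
  have := hS _ (mem_arcsIn.mp he).1
  exact card_pos.mp (by rw [card_nbPred he]; omega)

lemma exp_nbEntropy_le (hS : ∀ v ∈ S, 2 ≤ G.degreeIn S v) (t : ℕ) {e : V × V}
    (he : e ∈ G.arcsIn S) :
    Real.exp (G.nbEntropy S t e) ≤ ∑ x ∈ S, (G.nbWalkCount S x t e : ℝ) := by
  induction t generalizing e with
  | zero => simp [nbEntropy, nbWalkCount, (mem_arcsIn.mp he).1]
  | succ t ih =>
    set P := G.nbPred S e
    have hP : P.Nonempty := nonempty_nbPred hS he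
    have hc : (0 : ℝ) < #P := by exact_mod_cast hP.card_pos
    calc Real.exp (G.nbEntropy S (t + 1) e)
        = #P * Real.exp ((∑ f ∈ P, G.nbEntropy S t f) / #P) := by
          rw [nbEntropy, Real.exp_add, Real.exp_log hc]
      _ ≤ #P * ((∑ f ∈ P, Real.exp (G.nbEntropy S t f)) / #P) := by
          gcongr; exact Real.exp_sum_div_card_le hP _
      _ = ∑ f ∈ P, Real.exp (G.nbEntropy S t f) := by field_simp
      _ ≤ ∑ f ∈ P, ∑ x ∈ S, (G.nbWalkCount S x t f : ℝ) :=
          sum_le_sum fun f hf => ih (nbPred_subset e hf)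
      _ = ∑ x ∈ S, (G.nbWalkCount S x (t + 1) e : ℝ) := by
          simp only [nbWalkCount, Nat.cast_sum]; exact sum_comm

lemma sum_nbEntropy (hS : ∀ v ∈ S, 2 ≤ G.degreeIn S v) (t : ℕ) :
    ∑ e ∈ G.arcsIn S, G.nbEntropy S t e =
      t * ∑ v ∈ S, G.degreeIn S v * Real.log (G.degreeIn S v - 1 : ℕ) := by
  induction t with
  | zero => simp [nbEntropy]
  | succ t ih =>
    have hd : ∀ f ∈ G.arcsIn S, ((G.degreeIn S f.2 - 1 : ℕ) : ℝ) ≠ 0 := fun f hf => by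
      have := hS _ (mem_arcsIn.mp hf).2.1
      exact_mod_cast (by omega : G.degreeIn S f.2 - 1 ≠ 0)
    have hstep : ∀ e ∈ G.arcsIn S, G.nbEntropy S (t + 1) e =
        Real.log (G.degreeIn S e.1 - 1 : ℕ) + ∑ f ∈ G.nbPred S e,
          G.nbEntropy S t f / (G.degreeIn S f.2 - 1 : ℕ) := fun e he => by
      rw [nbEntropy, card_nbPred he, sum_div]
      congr 1
      exact sum_congr rfl fun f hf => by rw [(mem_filter.mp hf).2.1]
    have hpred : ∑ e ∈ G.arcsIn S, ∑ f ∈ G.nbPred S e,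
        G.nbEntropy S t f / (G.degreeIn S f.2 - 1 : ℕ) =
          ∑ f ∈ G.arcsIn S, G.nbEntropy S t f := by
      rw [sum_sum_nbPred]
      exact sum_congr rfl fun f hf => by rw [nsmul_eq_mul, mul_div_cancel₀ _ (hd f hf)]
    rw [sum_congr rfl hstep, sum_add_distrib, hpred, ih,
      sum_arcsIn_fst fun v => Real.log (G.degreeIn S v - 1 : ℕ)]
    simp only [nsmul_eq_mul]
    push_cast
    ring

theorem mul_sum_degreeIn_mul_log_le [Fintype V] (hS : ∀ v ∈ S, 2 ≤ G.degreeIn S v) {t : ℕ}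
    (hg : ((2 * (t + 1) : ℕ) : ℕ∞) < G.egirth) :
    t * ∑ v ∈ S, G.degreeIn S v * Real.log (G.degreeIn S v - 1 : ℕ) ≤
      (∑ v ∈ S, G.degreeIn S v : ℕ) * Real.log (Fintype.card V) := by
  rw [← sum_nbEntropy hS, ← card_arcsIn]
  set A := G.arcsIn S
  rcases A.eq_empty_or_nonempty with hA | hA
  · simp [hA]
  have hA' : (0 : ℝ) < #A := by exact_mod_cast hA.card_pos
  have hSA : #S ≤ #A := by
    rw [card_arcsIn, card_eq_sum_ones]
    exact sum_le_sum fun v hv => (hS v hv).trans' (by norm_num)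
  have hcount : ∑ e ∈ A, ∑ x ∈ S, G.nbWalkCount S x t e ≤ #S * Fintype.card V := by
    rw [sum_comm]
    exact sum_le_card_nsmul _ _ _ fun x _ => sum_nbWalkCount_le_card hg x
  have hexp : Real.exp ((∑ e ∈ A, G.nbEntropy S t e) / #A) ≤ Fintype.card V :=
    calc Real.exp ((∑ e ∈ A, G.nbEntropy S t e) / #A)
        ≤ (∑ e ∈ A, Real.exp (G.nbEntropy S t e)) / #A := Real.exp_sum_div_card_le hA _
      _ ≤ (∑ e ∈ A, ∑ x ∈ S, (G.nbWalkCount S x t e : ℝ)) / #A := by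
          gcongr with e he; exact exp_nbEntropy_le hS t he
      _ ≤ (#S * Fintype.card V) / #A := by gcongr; exact_mod_cast hcount
      _ ≤ Fintype.card V := by
          rw [div_le_iff₀ hA', mul_comm]; gcongr
  rw [← div_le_iff₀' hA']
  exact (Real.le_log_iff_exp_le ((Real.exp_pos _).trans_le hexp)).mpr hexp

theorem two_mul_mul_sum_degreeIn_sub_two_le [Fintype V] (hS : ∀ v ∈ S, 2 ≤ G.degreeIn S v)
    {t : ℕ} (hg : ((2 * (t + 1) : ℕ) : ℕ∞) < G.egirth) :
    2 * t * ∑ v ∈ S, ((G.degreeIn S v : ℝ) - 2) ≤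
      (∑ v ∈ S, ((G.degreeIn S v : ℝ) - 2) + 2 * #S) * Real.log (Fintype.card V) := by
  have hsum :
      ∑ v ∈ S, ((G.degreeIn S v : ℝ) - 2) + 2 * #S = (∑ v ∈ S, G.degreeIn S v : ℕ) := by
    simp [sum_sub_distrib, mul_comm]
  rw [hsum, mul_comm 2, mul_assoc, mul_sum]
  refine le_trans ?_ (mul_sum_degreeIn_mul_log_le hS hg)
  exact mul_le_mul_of_nonneg_left
    (sum_le_sum fun v hv => two_mul_sub_two_le_mul_log (hS v hv)) t.cast_nonneg

end SimpleGraph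

theorem excess_le_of_girth_general {V : Type*} [Fintype V]
    (H : SimpleGraph V) (g : ℕ)
    (hv : 3 ≤ Fintype.card V)
    (hgirth : (g : ℕ∞) ≤ H.egirth)
    (hg : 20 * Real.log (Fintype.card V) ≤ (g : ℝ)) :
    (H.edgeFinset.card : ℝ) - (Fintype.card V : ℝ)
      ≤ (2 * Real.log (Fintype.card V) / (g : ℝ)) * (Fintype.card V : ℝ) := by
  have hL : 1 ≤ Real.log (Fintype.card V) :=
    (by linarith [Real.log_three_gt_d9] : (1 : ℝ) ≤ Real.log 3).trans
      (Real.log_le_log (by norm_num) (by exact_mod_cast hv))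
  have hg3 : 3 ≤ g := by exact_mod_cast (by linarith : (3 : ℝ) ≤ g)
  obtain ⟨S, hS, hexc⟩ := H.exists_two_le_degreeIn_sum_sub_le univ
  set D := ∑ v ∈ S, ((H.degreeIn S v : ℝ) - 2)
  rw [H.sum_degreeIn_univ_sub_two] at hexc
  have hE : 2 * ((#H.edgeFinset : ℝ) - Fintype.card V) ≤ D := by
    push_cast [← Int.cast_le (R := ℝ)] at hexc
    exact hexc
  have hD : 0 ≤ D := sum_nonneg fun v hv => sub_nonneg.mpr (by exact_mod_cast hS v hv)
  -- Non-backtracking walks of length `t + 1` with `2 * (t + 1) < g ≤ 2 * t + 4`.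
  set t := (g - 3) / 2
  have ht : ((2 * (t + 1) : ℕ) : ℕ∞) < H.egirth :=
    (Nat.cast_lt.mpr (by omega : 2 * (t + 1) < g)).trans_le hgirth
  have hmoore := H.two_mul_mul_sum_degreeIn_sub_two_le hS ht
  have htg : (g : ℝ) ≤ 2 * t + 4 := by exact_mod_cast (by omega : g ≤ 2 * t + 4)
  have hSn : (#S : ℝ) ≤ Fintype.card V := by exact_mod_cast card_le_univ S
  -- `D (g - 4) ≤ 2 t D ≤ (D + 2 n) log n`, and `g / 2 ≥ 4 + log n`.
  rw [div_mul_eq_mul_div, le_div_iff₀ (by positivity)]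
  nlinarith [mul_le_mul_of_nonneg_left htg hD,
    mul_le_mul_of_nonneg_right hSn (by linarith : 0 ≤ Real.log (Fintype.card V))]

/-- Corollary 2.18, after Alon–Hoory–Linial.  Let `H` be a graph with
`v ≥ 3` vertices whose girth is at least `g`, where `g ≥ 20·ln v` (girth at least `g`
means `H` has no cycle of length less than `g`).  Then the excess `|E| − |V|` of `H` is
at most `((2·ln v)/g)·v`. -/
theorem excess_le_of_girth {V : Type*} [Fintype V] [DecidableEq V]
    (H : SimpleGraph V) (g : ℕ)
    (hv : 3 ≤ Fintype.card V)
    (hgirth : (g : ℕ∞) ≤ H.egirth)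
    (hg : 20 * Real.log (Fintype.card V) ≤ (g : ℝ)) :
    (H.edgeFinset.card : ℝ) - (Fintype.card V : ℝ)
      ≤ (2 * Real.log (Fintype.card V) / (g : ℝ)) * (Fintype.card V : ℝ) :=
  excess_le_of_girth_general H g hv hgirth hg
end
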